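/- arXiv:2007.11370 — 8 statements merged into one kernel-verified Lean document; each statement's English description precedes it below -/
import Mathlib

section
/- Let (X,d) and (Y,μ) be metric spaces, let 𝓑 be a bornology on X, let (G,≥) be a directed set and I a non-trivial ideal of subsets of G with associated filter F(I). Let {(D_γ,u_γ)}_{γ∈G} be a net of partial maps from X to Y and (D,u) a partial map from X to Y. Then the net {(D_γ,u_γ)} is P_I^+(𝓑)-convergent to (D,u) if and only if for every B ∈ 𝓑 and every ε > 0, the set {γ ∈ G : sup_{z ∈ D_γ ∩ B} inf_{x ∈ D ∩ B_d(z,ε)} μ(u(x), u_γ(z)) < ε} belongs to F(I), where B_d(z,ε) denotes the open ball in X of center z and radius ε. -/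
open Set Metric

/-- A non-trivial ideal of subsets of `G`: contains `∅`, closed under finite unions
and under taking subsets, and does not contain `G` itself. -/
structure SetIdeal (G : Type*) where
  sets : Set (Set G)
  empty_mem : (∅ : Set G) ∈ sets
  union_mem : ∀ A B : Set G, A ∈ sets → B ∈ sets → A ∪ B ∈ sets
  subset_mem : ∀ A B : Set G, A ∈ sets → B ⊆ A → B ∈ sets
  univ_not_mem : (Set.univ : Set G) ∉ sets

/-- The filter associated with an ideal: `F(I) = {A ⊆ G : G \ A ∈ I}`. -/
def SetIdeal.F {G : Type*} (I : SetIdeal G) : Set (Set G) :=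
  {A : Set G | Aᶜ ∈ I.sets}

/-- A bornology on `X`: a family of nonempty subsets of `X` covering `X`,
closed under finite unions and under taking nonempty subsets. -/
structure Borno (X : Type*) where
  sets : Set (Set X)
  nonempty_mem : ∀ B ∈ sets, B.Nonempty
  covers : ∀ x : X, ∃ B ∈ sets, x ∈ B
  union_mem : ∀ A B : Set X, A ∈ sets → B ∈ sets → A ∪ B ∈ sets
  subset_mem : ∀ A B : Set X, A ∈ sets → B ⊆ A → B.Nonempty → B ∈ sets

/-- A partial map from `X` to `Y`: a nonempty closed subset `dom ⊆ X`
together with a map defined on it (modelled as a total map `X → Y`,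
only its values on `dom` are ever used). -/
structure PartialMap (X Y : Type*) [TopologicalSpace X] where
  dom : Set X
  dom_nonempty : dom.Nonempty
  dom_closed : IsClosed dom
  toFun : X → Y

/-- `P_I^-(𝓑)`-convergence (lower bornological `I`-convergence) of a net of
partial maps: for every `B ∈ 𝓑` and `ε > 0`,
`{γ : ∀ B₁ ⊆ B, u(D ∩ B₁) ⊆ [u_γ(D_γ ∩ B₁^ε)]^ε} ∈ F(I)`. -/
def PIlower {G X Y : Type*} [MetricSpace X] [MetricSpace Y]
    (I : SetIdeal G) (𝓑 : Borno X) (P : G → PartialMap X Y) (Q : PartialMap X Y) : Prop :=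
  ∀ B ∈ 𝓑.sets, ∀ ε : ℝ, 0 < ε →
    {γ : G | ∀ B₁ ⊆ B, Q.toFun '' (Q.dom ∩ B₁) ⊆
      thickening ε ((P γ).toFun '' ((P γ).dom ∩ thickening ε B₁))} ∈ I.F

/-- `P_I^+(𝓑)`-convergence (upper bornological `I`-convergence) of a net of
partial maps: for every `B ∈ 𝓑` and `ε > 0`,
`{γ : ∀ B₁ ⊆ B, u_γ(D_γ ∩ B₁) ⊆ [u(D ∩ B₁^ε)]^ε} ∈ F(I)`. -/
def PIupper {G X Y : Type*} [MetricSpace X] [MetricSpace Y]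
    (I : SetIdeal G) (𝓑 : Borno X) (P : G → PartialMap X Y) (Q : PartialMap X Y) : Prop :=
  ∀ B ∈ 𝓑.sets, ∀ ε : ℝ, 0 < ε →
    {γ : G | ∀ B₁ ⊆ B, (P γ).toFun '' ((P γ).dom ∩ B₁) ⊆
      thickening ε (Q.toFun '' (Q.dom ∩ thickening ε B₁))} ∈ I.F

/-- `P_I^+(𝓑)`-convergence is equivalent to: for every `B ∈ 𝓑` and `ε > 0`,
`{γ : sup_{z ∈ D_γ ∩ B} inf_{x ∈ D ∩ B(z,ε)} μ(u x, u_γ z) < ε} ∈ F(I)`. -/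
theorem stmt2 {G : Type*} [Preorder G] [Nonempty G]
    (hdir : ∀ a b : G, ∃ c : G, a ≤ c ∧ b ≤ c)
    {X Y : Type*} [MetricSpace X] [MetricSpace Y]
    (I : SetIdeal G) (𝓑 : Borno X)
    (P : G → PartialMap X Y) (Q : PartialMap X Y) :
    PIupper I 𝓑 P Q ↔
      ∀ B ∈ 𝓑.sets, ∀ ε : ℝ, 0 < ε →
        {γ : G | (⨆ z ∈ (P γ).dom ∩ B, ⨅ x ∈ Q.dom ∩ ball z ε,
          edist (Q.toFun x) ((P γ).toFun z)) < ENNReal.ofReal ε} ∈ I.F := by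

  classical
  have Fmono : ∀ {A B : Set G}, A ∈ I.F → A ⊆ B → B ∈ I.F := by
    intro A B hA h
    exact I.subset_mem _ _ hA (Set.compl_subset_compl.2 h)
  constructor
  · intro h B hB ε hε
    refine Fmono (h B hB (ε/2) (by linarith)) ?_
    intro γ hγ
    simp only [Set.mem_setOf_eq] at hγ ⊢
    refine lt_of_le_of_lt (iSup₂_le fun z hz => ?_)
      ((ENNReal.ofReal_lt_ofReal_iff hε).2 (by linarith : ε/2 < ε))
    have hmem := hγ {z} (by simpa using hz.2) ⟨z, ⟨hz.1, rfl⟩, rfl⟩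
    rw [Metric.mem_thickening_iff] at hmem
    obtain ⟨y, ⟨x, ⟨hxD, hxt⟩, rfl⟩, hdist⟩ := hmem
    have hxball : x ∈ ball z ε := by
      rw [Metric.mem_thickening_iff] at hxt
      obtain ⟨w, hw, hd⟩ := hxt
      simp only [Set.mem_singleton_iff] at hw
      subst hw
      exact mem_ball.2 (by linarith)
    refine le_trans (iInf₂_le x ⟨hxD, hxball⟩) ?_
    rw [edist_dist, dist_comm]
    exact ENNReal.ofReal_le_ofReal (le_of_lt hdist)
  · intro h B hB ε hε
    refine Fmono (h B hB ε hε) ?_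
    intro γ hγ
    simp only [Set.mem_setOf_eq] at hγ ⊢
    rintro B₁ hB₁ y ⟨z, ⟨hzD, hzB₁⟩, rfl⟩
    have hle : (⨅ x ∈ Q.dom ∩ ball z ε, edist (Q.toFun x) ((P γ).toFun z))
        < ENNReal.ofReal ε :=
      lt_of_le_of_lt (le_iSup₂ (f := fun z _ => ⨅ x ∈ Q.dom ∩ ball z ε,
        edist (Q.toFun x) ((P γ).toFun z)) z ⟨hzD, hB₁ hzB₁⟩) hγ
    obtain ⟨x, hx, hlt⟩ : ∃ x ∈ Q.dom ∩ ball z ε,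
        edist (Q.toFun x) ((P γ).toFun z) < ENNReal.ofReal ε := by
      by_contra hcon
      push_neg at hcon
      exact absurd (le_iInf₂ hcon) (not_le.2 hle)
    rw [Metric.mem_thickening_iff]
    refine ⟨Q.toFun x, ⟨x, ⟨hx.1, ?_⟩, rfl⟩, ?_⟩
    · rw [Metric.mem_thickening_iff]
      exact ⟨z, hzB₁, mem_ball.1 hx.2⟩
    · rw [dist_comm]
      exact edist_lt_ofReal.1 hlt
end

section
/- Let (X,d) and (Y,μ) be metric spaces, let 𝓑 be a bornology on X, let (G,≥) be a directed set and I a non-trivial ideal of subsets of G with associated filter F(I). Let {(D_γ,u_γ)}_{γ∈G} be a net of partial maps from X to Y and (D,u) a partial map from X to Y. Then the net {(D_γ,u_γ)} is P_I^−(𝓑)-convergent to (D,u) if and only if for every B ∈ 𝓑 and every ε > 0, the set {γ ∈ G : sup_{z ∈ D ∩ B} inf_{x ∈ D_γ ∩ B_d(z,ε)} μ(u(z), u_γ(x)) < ε} belongs to F(I), where B_d(z,ε) denotes the open ball in X of center z and radius ε. -/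
open Set Metric

lemma SetIdeal.F_mono {G : Type*} (I : SetIdeal G) {A B : Set G}
    (h : A ∈ I.F) (hAB : A ⊆ B) : B ∈ I.F :=
  I.subset_mem _ _ h (Set.compl_subset_compl.mpr hAB)

/-- `P_I^-(𝓑)`-convergence is equivalent to: for every `B ∈ 𝓑` and `ε > 0`,
`{γ : sup_{z ∈ D ∩ B} inf_{x ∈ D_γ ∩ B(z,ε)} μ(u z, u_γ x) < ε} ∈ F(I)`. -/
theorem stmt3 {G : Type*} [Preorder G] [Nonempty G]
    (hdir : ∀ a b : G, ∃ c : G, a ≤ c ∧ b ≤ c)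
    {X Y : Type*} [MetricSpace X] [MetricSpace Y]
    (I : SetIdeal G) (𝓑 : Borno X)
    (P : G → PartialMap X Y) (Q : PartialMap X Y) :
    PIlower I 𝓑 P Q ↔
      ∀ B ∈ 𝓑.sets, ∀ ε : ℝ, 0 < ε →
        {γ : G | (⨆ z ∈ Q.dom ∩ B, ⨅ x ∈ (P γ).dom ∩ ball z ε,
          edist (Q.toFun z) ((P γ).toFun x)) < ENNReal.ofReal ε} ∈ I.F := by
  constructor
  · intro h B hB ε hε
    refine I.F_mono (h B hB (ε/2) (by linarith)) ?_
    intro γ hγ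
    simp only [Set.mem_setOf_eq] at hγ ⊢
    have hle : (⨆ z ∈ Q.dom ∩ B, ⨅ x ∈ (P γ).dom ∩ ball z ε,
        edist (Q.toFun z) ((P γ).toFun x)) ≤ ENNReal.ofReal (ε/2) := by
      refine iSup₂_le fun z hz => ?_
      have hz1 : Q.toFun z ∈
          thickening (ε/2) ((P γ).toFun '' ((P γ).dom ∩ thickening (ε/2) {z})) := by
        apply hγ {z} (by simpa using hz.2)
        exact ⟨z, ⟨hz.1, rfl⟩, rfl⟩
      rw [mem_thickening_iff_exists_edist_lt] at hz1
      obtain ⟨y, ⟨x, ⟨hx1, hx2⟩, rfl⟩, hy⟩ := hz1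
      have hx2' : x ∈ ball z ε := by
        rw [thickening_singleton] at hx2
        exact ball_subset_ball (by linarith) hx2
      exact le_trans (iInf₂_le x ⟨hx1, hx2'⟩) hy.le
    exact lt_of_le_of_lt hle (by
      rw [ENNReal.ofReal_lt_ofReal_iff hε]; linarith)
  · intro h B hB ε hε
    refine I.F_mono (h B hB ε hε) ?_
    intro γ hγ B₁ hB₁ y hy
    obtain ⟨z, ⟨hzD, hzB₁⟩, rfl⟩ := hy
    have hz : (⨅ x ∈ (P γ).dom ∩ ball z ε, edist (Q.toFun z) ((P γ).toFun x))
        < ENNReal.ofReal ε :=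
      lt_of_le_of_lt
        (le_iSup₂ (f := fun z _ => ⨅ x ∈ (P γ).dom ∩ ball z ε,
          edist (Q.toFun z) ((P γ).toFun x)) z ⟨hzD, hB₁ hzB₁⟩) hγ
    obtain ⟨x, hx⟩ := iInf_lt_iff.mp hz
    obtain ⟨hxS, hlt⟩ := iInf_lt_iff.mp hx
    rw [mem_thickening_iff_exists_edist_lt]
    refine ⟨(P γ).toFun x, ⟨x, ⟨hxS.1, ?_⟩, rfl⟩, hlt⟩
    rw [mem_thickening_iff]
    exact ⟨z, hzB₁, mem_ball.mp hxS.2⟩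
end

section
/- Let (X,d) and (Y,μ) be metric spaces, let 𝓑 be a bornology on X, let (G,≥) be a directed set and I a non-trivial ideal of subsets of G with associated filter F(I). Equip X × Y with the metric d × μ given by the maximum of the coordinate distances, and let 𝓑* be the bornology on X × Y generated by the base {B × Y : B ∈ 𝓑}. Let {(D_γ,u_γ)}_{γ∈G} be a net of partial maps from X to Y and (D,u) a partial map from X to Y. Then the net of graphs {Gr(u_γ)}_{γ∈G} is lower bornologically I-convergent ((𝓑*)_I^−-convergent) to Gr(u) in X × Y if and only if the net {(D_γ,u_γ)} is P_I^−(𝓑)-convergent to (D,u). -/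
open Set Metric

/-- Lower bornological `I`-convergence of a net of sets:
for every `B ∈ 𝓑` and `ε > 0`, `{γ : D ∩ B ⊆ (A γ)^ε} ∈ F(I)`. -/
def lowerBConvI {G X : Type*} [MetricSpace X] (I : SetIdeal G) (𝓑 : Borno X)
    (A : G → Set X) (D : Set X) : Prop :=
  ∀ B ∈ 𝓑.sets, ∀ ε : ℝ, 0 < ε → {γ : G | D ∩ B ⊆ thickening ε (A γ)} ∈ I.F

/-- Upper bornological `I`-convergence of a net of sets:
for every `B ∈ 𝓑` and `ε > 0`, `{γ : A γ ∩ B ⊆ D^ε} ∈ F(I)`. -/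
def upperBConvI {G X : Type*} [MetricSpace X] (I : SetIdeal G) (𝓑 : Borno X)
    (A : G → Set X) (D : Set X) : Prop :=
  ∀ B ∈ 𝓑.sets, ∀ ε : ℝ, 0 < ε → {γ : G | A γ ∩ B ⊆ thickening ε D} ∈ I.F

/-- The graph of a partial map: `Gr(u) = {(x, u x) : x ∈ dom}`. -/
def PartialMap.graph {X Y : Type*} [TopologicalSpace X] (Q : PartialMap X Y) : Set (X × Y) :=
  (fun x => (x, Q.toFun x)) '' Q.dom

/-- The bornology `𝓑*` on `X × Y` generated by the base `{B × Y : B ∈ 𝓑}`: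
its members are the nonempty subsets of the basic sets `B × Y`. -/
def prodBorn {X Y : Type*} (𝓑 : Borno X) : Borno (X × Y) where
  sets := {A : Set (X × Y) | A.Nonempty ∧ ∃ B ∈ 𝓑.sets, A ⊆ B ×ˢ (Set.univ : Set Y)}
  nonempty_mem := fun _ hA => hA.1
  covers := fun p => by
    obtain ⟨B, hB, hx⟩ := 𝓑.covers p.1
    exact ⟨B ×ˢ (Set.univ : Set Y), ⟨⟨p, ⟨hx, trivial⟩⟩, ⟨B, hB, subset_rfl⟩⟩, ⟨hx, trivial⟩⟩
  union_mem := by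
    rintro A₁ A₂ ⟨hne₁, B₁, hB₁, hs₁⟩ ⟨hne₂, B₂, hB₂, hs₂⟩
    refine ⟨hne₁.mono Set.subset_union_left, B₁ ∪ B₂, 𝓑.union_mem _ _ hB₁ hB₂, ?_⟩
    exact Set.union_subset (hs₁.trans (Set.prod_mono Set.subset_union_left subset_rfl))
      (hs₂.trans (Set.prod_mono Set.subset_union_right subset_rfl))
  subset_mem := by
    rintro A₁ A₂ ⟨hne₁, B₁, hB₁, hs₁⟩ hsub hne
    exact ⟨hne, B₁, hB₁, hsub.trans hs₁⟩

/-- The graphs `Gr(u_γ)` are lower bornologically `I`-convergent to `Gr(u)` with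
respect to `𝓑*` in `X × Y` iff the net of partial maps is `P_I^-(𝓑)`-convergent. -/
theorem stmt4 {G : Type*} [Preorder G] [Nonempty G]
    (hdir : ∀ a b : G, ∃ c : G, a ≤ c ∧ b ≤ c)
    {X Y : Type*} [MetricSpace X] [MetricSpace Y]
    (I : SetIdeal G) (𝓑 : Borno X)
    (P : G → PartialMap X Y) (Q : PartialMap X Y) :
    lowerBConvI I (prodBorn 𝓑) (fun γ => (P γ).graph) Q.graph ↔ PIlower I 𝓑 P Q := by
  have : Nonempty Y := ⟨Q.toFun Q.dom_nonempty.choose⟩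
  constructor
  · intro h B hB ε hε
    have hmem : (B ×ˢ (Set.univ : Set Y)) ∈ (prodBorn 𝓑 (Y := Y)).sets :=
      ⟨(𝓑.nonempty_mem B hB).prod Set.univ_nonempty, B, hB, subset_rfl⟩
    have hS := h _ hmem ε hε
    refine I.subset_mem _ _ hS (compl_subset_compl.mpr ?_)
    intro γ hγ B₁ hB₁ y hy
    obtain ⟨x, ⟨hxD, hxB₁⟩, rfl⟩ := hy
    have hx : (x, Q.toFun x) ∈ thickening ε ((P γ).graph) :=
      hγ ⟨⟨x, hxD, rfl⟩, hB₁ hxB₁, trivial⟩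
    rw [mem_thickening_iff] at hx
    obtain ⟨p, hp, hd⟩ := hx
    obtain ⟨z, hz, rfl⟩ := hp
    rw [Prod.dist_eq] at hd
    simp only [max_lt_iff] at hd
    rw [mem_thickening_iff]
    refine ⟨(P γ).toFun z, ⟨z, ⟨hz, ?_⟩, rfl⟩, hd.2⟩
    rw [mem_thickening_iff]
    exact ⟨x, hxB₁, by rw [dist_comm]; exact hd.1⟩
  · intro h A hA ε hε
    obtain ⟨hAne, B, hB, hsub⟩ := hA
    have hS := h B hB ε hε
    refine I.subset_mem _ _ hS (compl_subset_compl.mpr ?_)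
    intro γ hγ p hp
    obtain ⟨⟨x, hxD, rfl⟩, hpA⟩ := hp
    have hxB : x ∈ B := (hsub hpA).1
    have hx := hγ {x} (Set.singleton_subset_iff.mpr hxB) ⟨x, ⟨hxD, rfl⟩, rfl⟩
    rw [mem_thickening_iff] at hx
    obtain ⟨y, ⟨z, ⟨hz, hzt⟩, rfl⟩, hd⟩ := hx
    rw [mem_thickening_iff]
    refine ⟨(z, (P γ).toFun z), ⟨z, hz, rfl⟩, ?_⟩
    rw [Prod.dist_eq]
    have hzx : dist x z < ε := by
      rw [mem_thickening_iff] at hzt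
      obtain ⟨w, hw, hdz⟩ := hzt
      rw [Set.mem_singleton_iff] at hw; subst hw
      rwa [dist_comm] at hdz
    exact max_lt hzx hd
end

section
/- Let (X,d) and (Y,μ) be metric spaces, let 𝓑 be a bornology on X, let (G,≥) be a directed set and I a non-trivial ideal of subsets of G with associated filter F(I). Equip X × Y with the metric d × μ given by the maximum of the coordinate distances, and let 𝓑* be the bornology on X × Y generated by the base {B × Y : B ∈ 𝓑}. Let {(D_γ,u_γ)}_{γ∈G} be a net of partial maps from X to Y and (D,u) a partial map from X to Y. Then the net of graphs {Gr(u_γ)}_{γ∈G} is upper bornologically I-convergent ((𝓑*)_I^+-convergent) to Gr(u) in X × Y if and only if the net {(D_γ,u_γ)} is P_I^+(𝓑)-convergent to (D,u). -/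
open Set Metric

lemma SetIdeal.F_mono_s5 {G : Type*} (I : SetIdeal G) {S T : Set G} (hS : S ∈ I.F)
    (hST : S ⊆ T) : T ∈ I.F :=
  I.subset_mem _ _ hS (Set.compl_subset_compl.2 hST)

/-- The graphs `Gr(u_γ)` are upper bornologically `I`-convergent to `Gr(u)` with
respect to `𝓑*` in `X × Y` iff the net of partial maps is `P_I^+(𝓑)`-convergent. -/
theorem stmt5 {G : Type*} [Preorder G] [Nonempty G]
    (hdir : ∀ a b : G, ∃ c : G, a ≤ c ∧ b ≤ c)
    {X Y : Type*} [MetricSpace X] [MetricSpace Y]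
    (I : SetIdeal G) (𝓑 : Borno X)
    (P : G → PartialMap X Y) (Q : PartialMap X Y) :
    upperBConvI I (prodBorn 𝓑) (fun γ => (P γ).graph) Q.graph ↔ PIupper I 𝓑 P Q := by
  have hY : Nonempty Y := ⟨Q.toFun Q.dom_nonempty.choose⟩
  constructor
  · intro h B hB ε hε
    have hBY : (B ×ˢ (Set.univ : Set Y)) ∈ (prodBorn (Y := Y) 𝓑).sets := by
      refine ⟨?_, B, hB, subset_rfl⟩
      obtain ⟨x, hx⟩ := 𝓑.nonempty_mem B hB
      exact ⟨(x, Classical.arbitrary Y), hx, trivial⟩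
    refine I.F_mono_s5 (h _ hBY ε hε) ?_
    intro γ hγ B₁ hB₁ y hy
    obtain ⟨x, ⟨hxD, hxB₁⟩, rfl⟩ := hy
    have hmem : (x, (P γ).toFun x) ∈ thickening ε Q.graph :=
      hγ ⟨⟨x, hxD, rfl⟩, hB₁ hxB₁, trivial⟩
    rw [mem_thickening_iff] at hmem
    obtain ⟨p, ⟨z, hz, rfl⟩, hd⟩ := hmem
    rw [Prod.dist_eq, max_lt_iff] at hd
    rw [mem_thickening_iff]
    refine ⟨Q.toFun z, ⟨z, ⟨hz, ?_⟩, rfl⟩, hd.2⟩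
    rw [mem_thickening_iff]
    exact ⟨x, hxB₁, by simpa [dist_comm] using hd.1⟩
  · intro h A hA ε hε
    obtain ⟨hAne, B, hB, hAsub⟩ := hA
    refine I.F_mono_s5 (h B hB ε hε) ?_
    intro γ hγ p hp
    obtain ⟨⟨x, hxD, rfl⟩, hpA⟩ := hp
    have hxB : x ∈ B := (hAsub hpA).1
    have hx : (P γ).toFun x ∈ thickening ε (Q.toFun '' (Q.dom ∩ thickening ε {x})) :=
      hγ {x} (Set.singleton_subset_iff.2 hxB) ⟨x, ⟨hxD, rfl⟩, rfl⟩
    rw [mem_thickening_iff] at hx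
    obtain ⟨y, ⟨z, ⟨hzD, hz⟩, rfl⟩, hd⟩ := hx
    rw [mem_thickening_iff] at hz
    obtain ⟨w, hw, hdw⟩ := hz
    rw [Set.mem_singleton_iff] at hw; subst hw
    rw [mem_thickening_iff]
    refine ⟨(z, Q.toFun z), ⟨z, hzD, rfl⟩, ?_⟩
    rw [Prod.dist_eq]
    exact max_lt (by rwa [dist_comm] at hdw) hd
end

section
/- Let (X,d) and (Y,μ) be metric spaces, let (G,≥) be a directed set and I a non-trivial ideal of subsets of G with associated filter F(I). Let 𝓑 be a local bornology on X, i.e. a bornology such that for every x ∈ X there is δ > 0 with the open ball B_d(x,δ) ∈ 𝓑. Let {(D_γ,u_γ)}_{γ∈G} be a net of partial maps from X to Y. If {(D_γ,u_γ)} is two-sidedly P_I(𝓑)-convergent both to a partial map (S,u) and to a partial map (T,v), then S = T. -/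
open Set Metric

lemma dom_subset_aux {G X Y : Type*} [MetricSpace X] [MetricSpace Y]
    (I : SetIdeal G) (𝓑 : Borno X)
    (hloc : ∀ x : X, ∃ δ : ℝ, 0 < δ ∧ ball x δ ∈ 𝓑.sets)
    (P : G → PartialMap X Y) (Q₁ Q₂ : PartialMap X Y)
    (hl : PIlower I 𝓑 P Q₁) (hu : PIupper I 𝓑 P Q₂) : Q₁.dom ⊆ Q₂.dom := by
  intro x hx
  by_contra hx2
  obtain ⟨δ, hδ, hB⟩ := hloc x
  obtain ⟨r, hr, hball⟩ := Metric.isOpen_iff.1 Q₂.dom_closed.isOpen_compl x hx2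
  set ε : ℝ := min δ (r / 2) with hεdef
  have hε : 0 < ε := lt_min hδ (by linarith)
  have hεδ : ε ≤ δ := min_le_left _ _
  have hεr : ε ≤ r / 2 := min_le_right _ _
  have hS1 := hl (ball x δ) hB ε hε
  have hS2 := hu (ball x δ) hB ε hε
  -- the intersection is in F(I), hence nonempty
  have hmem : ({γ : G | ∀ B₁ ⊆ ball x δ, Q₁.toFun '' (Q₁.dom ∩ B₁) ⊆
        thickening ε ((P γ).toFun '' ((P γ).dom ∩ thickening ε B₁))} ∩
      {γ : G | ∀ B₁ ⊆ ball x δ, (P γ).toFun '' ((P γ).dom ∩ B₁) ⊆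
        thickening ε (Q₂.toFun '' (Q₂.dom ∩ thickening ε B₁))}).Nonempty := by
    rw [Set.nonempty_iff_ne_empty]
    intro hempty
    have : (Set.univ : Set G) ∈ I.sets := by
      have := I.union_mem _ _ hS1 hS2
      have heq : ({γ : G | ∀ B₁ ⊆ ball x δ, Q₁.toFun '' (Q₁.dom ∩ B₁) ⊆
          thickening ε ((P γ).toFun '' ((P γ).dom ∩ thickening ε B₁))}ᶜ ∪
        {γ : G | ∀ B₁ ⊆ ball x δ, (P γ).toFun '' ((P γ).dom ∩ B₁) ⊆
          thickening ε (Q₂.toFun '' (Q₂.dom ∩ thickening ε B₁))}ᶜ) = Set.univ := by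
        rw [← Set.compl_inter, hempty, Set.compl_empty]
      rwa [heq] at this
    exact I.univ_not_mem this
  obtain ⟨γ, hγ1, hγ2⟩ := hmem
  -- apply lower with B₁ = {x}
  have h1 := hγ1 {x} (Set.singleton_subset_iff.2 (mem_ball_self hδ))
  have hy : Q₁.toFun x ∈ Q₁.toFun '' (Q₁.dom ∩ {x}) :=
    ⟨x, ⟨hx, rfl⟩, rfl⟩
  have hy' := h1 hy
  obtain ⟨z, hz, hdz⟩ := Metric.mem_thickening_iff.1 hy'
  obtain ⟨p, ⟨hpD, hpt⟩, rfl⟩ := hz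
  rw [Metric.thickening_singleton] at hpt
  -- apply upper with B₁ = ball x ε
  have h2 := hγ2 (ball x ε) (ball_subset_ball hεδ)
  have hw : (P γ).toFun p ∈ (P γ).toFun '' ((P γ).dom ∩ ball x ε) :=
    ⟨p, ⟨hpD, hpt⟩, rfl⟩
  have hw' := h2 hw
  obtain ⟨w, hw2, _⟩ := Metric.mem_thickening_iff.1 hw'
  obtain ⟨q, ⟨hqD, hqt⟩, rfl⟩ := hw2
  obtain ⟨q', hq', hdq⟩ := Metric.mem_thickening_iff.1 hqt
  have hdq' : dist q x < r := by
    have : dist q' x < ε := mem_ball.1 hq'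
    calc dist q x ≤ dist q q' + dist q' x := dist_triangle _ _ _
      _ < ε + ε := by linarith
      _ ≤ r := by linarith
  exact hball (mem_ball.2 hdq') hqD

/-- If `𝓑` is a local bornology and a net of partial maps is two-sidedly
`P_I(𝓑)`-convergent to both `(S,u)` and `(T,v)`, then `S = T`. -/
theorem stmt7 {G : Type*} [Preorder G] [Nonempty G]
    (hdir : ∀ a b : G, ∃ c : G, a ≤ c ∧ b ≤ c)
    {X Y : Type*} [MetricSpace X] [MetricSpace Y]
    (I : SetIdeal G) (𝓑 : Borno X)
    (hloc : ∀ x : X, ∃ δ : ℝ, 0 < δ ∧ ball x δ ∈ 𝓑.sets)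
    (P : G → PartialMap X Y) (Q₁ Q₂ : PartialMap X Y)
    (h1 : PIlower I 𝓑 P Q₁ ∧ PIupper I 𝓑 P Q₁)
    (h2 : PIlower I 𝓑 P Q₂ ∧ PIupper I 𝓑 P Q₂) :
    Q₁.dom = Q₂.dom :=
  Set.Subset.antisymm (dom_subset_aux I 𝓑 hloc P Q₁ Q₂ h1.1 h2.2)
    (dom_subset_aux I 𝓑 hloc P Q₂ Q₁ h2.1 h1.2)
end

section
/- Let (X,d) be a metric space, 𝓑 a bornology on X, (G,≥) a directed set, and I a G-admissible non-trivial ideal of subsets of G (i.e. for every γ ∈ G the tail set M_γ = {α ∈ G : α ≥ γ} belongs to the associated filter F(I)). Let {D_γ}_{γ∈G} be a net of nonempty subsets of X and D a nonempty subset of X. If {D_γ} is bornologically I*-convergent to D, then {D_γ} is two-sidedly bornologically I-convergent to D. -/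
open Set Metric

/-- Bornological `I*`-convergence of a net of sets: there is `G' ∈ F(I)` which is
itself a directed set under the induced order, on which the net is (ordinary)
two-sidedly bornologically convergent to `D`. -/
def BConvIstar {G X : Type*} [Preorder G] [MetricSpace X] (I : SetIdeal G) (𝓑 : Borno X)
    (A : G → Set X) (D : Set X) : Prop :=
  ∃ G' ∈ I.F, G'.Nonempty ∧ (∀ a ∈ G', ∀ b ∈ G', ∃ c ∈ G', a ≤ c ∧ b ≤ c) ∧
    ∀ B ∈ 𝓑.sets, ∀ ε : ℝ, 0 < ε → ∃ γ₀ ∈ G', ∀ γ ∈ G', γ₀ ≤ γ →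
      D ∩ B ⊆ thickening ε (A γ) ∧ A γ ∩ B ⊆ thickening ε D

/-- For a `G`-admissible ideal, bornological `I*`-convergence of a net of nonempty
sets implies two-sided bornological `I`-convergence. -/
theorem stmt8 {G : Type*} [Preorder G] [Nonempty G]
    (hdir : ∀ a b : G, ∃ c : G, a ≤ c ∧ b ≤ c)
    {X : Type*} [MetricSpace X]
    (I : SetIdeal G) (hadm : ∀ γ : G, {α : G | γ ≤ α} ∈ I.F)
    (𝓑 : Borno X) (A : G → Set X) (hA : ∀ γ, (A γ).Nonempty)
    (D : Set X) (hD : D.Nonempty)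
    (h : BConvIstar I 𝓑 A D) :
    lowerBConvI I 𝓑 A D ∧ upperBConvI I 𝓑 A D := by
  obtain ⟨G', hG', -, -, hconv⟩ := h
  have key : ∀ B ∈ 𝓑.sets, ∀ ε : ℝ, 0 < ε →
      {γ : G | D ∩ B ⊆ thickening ε (A γ) ∧ A γ ∩ B ⊆ thickening ε D} ∈ I.F := by
    intro B hB ε hε
    obtain ⟨γ₀, hγ₀, hγ⟩ := hconv B hB ε hε
    have hsub : (G' ∩ {α : G | γ₀ ≤ α}) ⊆
        {γ : G | D ∩ B ⊆ thickening ε (A γ) ∧ A γ ∩ B ⊆ thickening ε D} := by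
      rintro γ ⟨hg, hge⟩
      exact hγ γ hg hge
    have hcompl : {γ : G | D ∩ B ⊆ thickening ε (A γ) ∧ A γ ∩ B ⊆ thickening ε D}ᶜ
        ⊆ G'ᶜ ∪ {α : G | γ₀ ≤ α}ᶜ := by
      intro γ hγc
      by_contra hc
      simp only [Set.mem_union, Set.mem_compl_iff, not_or, not_not] at hc
      exact hγc (hsub ⟨hc.1, hc.2⟩)
    exact I.subset_mem _ _ (I.union_mem _ _ hG' (hadm γ₀)) (by
      simpa [Set.compl_inter] using hcompl)
  constructor
  · intro B hB ε hε
    exact I.subset_mem _ _ (key B hB ε hε) (by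
      intro γ hc; exact fun h' => hc h'.1)
  · intro B hB ε hε
    exact I.subset_mem _ _ (key B hB ε hε) (by
      intro γ hc; exact fun h' => hc h'.2)
end

section
/- Let (G,≥) be a directed set and I a G-admissible non-trivial ideal of subsets of G satisfying the condition (DP). Then for any countable family {E_1, E_2, …} of sets in the associated filter F(I), there exists a set E ∈ F(I) such that E, with the order induced from (G,≥), is itself a directed set, and for each i ∈ ℕ there exists γ^(i) ∈ G with E ∖ E_i ⊆ G ∖ M_{γ^(i)}, where M_γ = {α ∈ G : α ≥ γ}. -/
open Set Metric

/-- The condition (DP) for a `G`-admissible ideal: for every countable family of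
mutually disjoint sets `P i ∈ I` there are sets `Q i ⊆ G` with each symmetric
difference `P i ∆ Q i` contained in the complement of some tail set `M_{γ_i}`,
and `⋃ i, Q i ∈ I`. -/
def CondDP {G : Type*} [Preorder G] (I : SetIdeal G) : Prop :=
  ∀ P : ℕ → Set G, (∀ i, P i ∈ I.sets) → (∀ i j, i ≠ j → Disjoint (P i) (P j)) →
    ∃ Q : ℕ → Set G,
      (∀ i, ∃ γ : G, symmDiff (P i) (Q i) ⊆ {α : G | γ ≤ α}ᶜ) ∧ (⋃ i, Q i) ∈ I.sets

/-- If a `G`-admissible ideal `I` satisfies condition (DP), then for every countable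
family `E i ∈ F(I)` there is `E ∈ F(I)` which is itself directed under the induced
order and such that each `E \ E i` is contained in the complement of a tail set. -/
theorem stmt9 {G : Type*} [Preorder G] [Nonempty G]
    (hdir : ∀ a b : G, ∃ c : G, a ≤ c ∧ b ≤ c)
    (I : SetIdeal G) (hadm : ∀ γ : G, {α : G | γ ≤ α} ∈ I.F)
    (hdp : CondDP I)
    (E : ℕ → Set G) (hE : ∀ i, E i ∈ I.F) :
    ∃ E' ∈ I.F, E'.Nonempty ∧ (∀ a ∈ E', ∀ b ∈ E', ∃ c ∈ E', a ≤ c ∧ b ≤ c) ∧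
      ∀ i : ℕ, ∃ γ : G, E' \ E i ⊆ {α : G | γ ≤ α}ᶜ := by
  classical
  haveI : IsDirected G (· ≤ ·) := ⟨hdir⟩
  set f : ℕ → Set G := fun i => (E i)ᶜ with hf
  obtain ⟨Q, hQγ, hQI⟩ := hdp (disjointed f)
    (fun i => I.subset_mem _ _ (hE i) (disjointed_subset f i))
    (fun i j hij => disjoint_disjointed f hij)
  choose γ hγ using hQγ
  refine ⟨(⋃ i, Q i)ᶜ, by simpa [SetIdeal.F] using hQI, ?_, ?_, ?_⟩
  · by_contra h
    rw [Set.not_nonempty_iff_eq_empty, Set.compl_empty_iff] at h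
    exact I.univ_not_mem (h ▸ hQI)
  · intro a _ b _
    obtain ⟨c0, hac, hbc⟩ := hdir a b
    have hne : ({α : G | c0 ≤ α} ∩ (⋃ i, Q i)ᶜ).Nonempty := by
      by_contra h
      rw [Set.not_nonempty_iff_eq_empty, ← Set.disjoint_iff_inter_eq_empty,
        Set.disjoint_compl_right_iff_subset] at h
      have : ({α : G | c0 ≤ α})ᶜ ∪ ⋃ i, Q i ∈ I.sets := I.union_mem _ _ (hadm c0) hQI
      have huniv : ({α : G | c0 ≤ α})ᶜ ∪ ⋃ i, Q i = Set.univ := by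
        apply Set.eq_univ_of_forall
        intro x
        by_cases hx : c0 ≤ x
        · exact Or.inr (h hx)
        · exact Or.inl hx
      exact I.univ_not_mem (huniv ▸ this)
    obtain ⟨c, hc1, hc2⟩ := hne
    exact ⟨c, hc2, hac.trans hc1, hbc.trans hc1⟩
  · intro i
    obtain ⟨γ', hγ'⟩ := Finset.exists_le ((Finset.range (i + 1)).image γ)
    refine ⟨γ', fun x hx => ?_⟩
    obtain ⟨hx1, hx2⟩ := hx
    have hxf : x ∈ partialSups f i := le_partialSups f i (by exact hx2)
    rw [← partialSups_disjointed, partialSups_eq_biSup] at hxf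
    simp only [Set.iSup_eq_iUnion, Set.mem_iUnion] at hxf
    obtain ⟨j, hji, hxj⟩ := hxf
    have hxQ : x ∉ Q j := fun h => hx1 (Set.mem_iUnion.2 ⟨j, h⟩)
    have : x ∈ symmDiff (disjointed f j) (Q j) := Or.inl ⟨hxj, hxQ⟩
    have hnot := hγ j this
    intro hle
    exact hnot (le_trans (hγ' (γ j) (Finset.mem_image.2 ⟨j, Finset.mem_range.2 (Nat.lt_succ_of_le hji), rfl⟩)) hle)
end

section
/- Let (X,d) and (Y,μ) be metric spaces, 𝓑 a bornology on X, (G,≥) a directed set, and I a G-admissible non-trivial ideal of subsets of G. Let {(D_γ,u_γ)}_{γ∈G} be a net of partial maps from X to Y and (D,u) a partial map from X to Y. If {(D_γ,u_γ)} is P_{I*}(𝓑)-convergent to (D,u), then {(D_γ,u_γ)} is two-sidedly P_I(𝓑)-convergent to (D,u). -/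
open Set Metric

/-- `P_{I*}(𝓑)`-convergence of a net of partial maps: there is `G' ∈ F(I)` which is
itself a directed set under the induced order, on which the net is (ordinary)
two-sidedly `P(𝓑)`-convergent to `(D,u)`. -/
def PIstar {G X Y : Type*} [Preorder G] [MetricSpace X] [MetricSpace Y]
    (I : SetIdeal G) (𝓑 : Borno X) (P : G → PartialMap X Y) (Q : PartialMap X Y) : Prop :=
  ∃ G' ∈ I.F, G'.Nonempty ∧ (∀ a ∈ G', ∀ b ∈ G', ∃ c ∈ G', a ≤ c ∧ b ≤ c) ∧
    ∀ B ∈ 𝓑.sets, ∀ ε : ℝ, 0 < ε → ∃ γ₀ ∈ G', ∀ γ ∈ G', γ₀ ≤ γ → ∀ B₁ ⊆ B,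
      Q.toFun '' (Q.dom ∩ B₁) ⊆
        thickening ε ((P γ).toFun '' ((P γ).dom ∩ thickening ε B₁)) ∧
      (P γ).toFun '' ((P γ).dom ∩ B₁) ⊆
        thickening ε (Q.toFun '' (Q.dom ∩ thickening ε B₁))

/-- For a `G`-admissible ideal, `P_{I*}(𝓑)`-convergence of a net of partial maps
implies two-sided `P_I(𝓑)`-convergence. -/
theorem stmt11 {G : Type*} [Preorder G] [Nonempty G]
    (hdir : ∀ a b : G, ∃ c : G, a ≤ c ∧ b ≤ c)
    {X Y : Type*} [MetricSpace X] [MetricSpace Y]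
    (I : SetIdeal G) (hadm : ∀ γ : G, {α : G | γ ≤ α} ∈ I.F)
    (𝓑 : Borno X) (P : G → PartialMap X Y) (Q : PartialMap X Y)
    (h : PIstar I 𝓑 P Q) :
    PIlower I 𝓑 P Q ∧ PIupper I 𝓑 P Q := by
  obtain ⟨G', hG', -, -, hconv⟩ := h
  have key : ∀ B ∈ 𝓑.sets, ∀ ε : ℝ, 0 < ε → ∃ γ₀ : G,
      (G' ∩ {α : G | γ₀ ≤ α}) ⊆ {γ : G | ∀ B₁ ⊆ B,
        Q.toFun '' (Q.dom ∩ B₁) ⊆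
          thickening ε ((P γ).toFun '' ((P γ).dom ∩ thickening ε B₁)) ∧
        (P γ).toFun '' ((P γ).dom ∩ B₁) ⊆
          thickening ε (Q.toFun '' (Q.dom ∩ thickening ε B₁))} := by
    intro B hB ε hε
    obtain ⟨γ₀, hγ₀, hall⟩ := hconv B hB ε hε
    exact ⟨γ₀, fun γ ⟨h1, h2⟩ => hall γ h1 h2⟩
  have mem : ∀ B ∈ 𝓑.sets, ∀ ε : ℝ, 0 < ε → {γ : G | ∀ B₁ ⊆ B,
      Q.toFun '' (Q.dom ∩ B₁) ⊆
        thickening ε ((P γ).toFun '' ((P γ).dom ∩ thickening ε B₁)) ∧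
      (P γ).toFun '' ((P γ).dom ∩ B₁) ⊆
        thickening ε (Q.toFun '' (Q.dom ∩ thickening ε B₁))} ∈ I.F := by
    intro B hB ε hε
    obtain ⟨γ₀, hsub⟩ := key B hB ε hε
    have h1 : G'ᶜ ∪ {α : G | γ₀ ≤ α}ᶜ ∈ I.sets :=
      I.union_mem _ _ hG' (hadm γ₀)
    refine I.subset_mem _ _ h1 ?_
    intro γ hγ
    by_contra hc
    simp only [Set.mem_union, Set.mem_compl_iff, not_or, not_not] at hc
    exact hγ (hsub ⟨hc.1, hc.2⟩)
  constructor
  · intro B hB ε hε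
    refine I.subset_mem _ _ (mem B hB ε hε) ?_
    intro γ hγ
    simp only [Set.mem_compl_iff, Set.mem_setOf_eq] at *
    intro hc
    exact hγ fun B₁ hB₁ => (hc B₁ hB₁).1
  · intro B hB ε hε
    refine I.subset_mem _ _ (mem B hB ε hε) ?_
    intro γ hγ
    simp only [Set.mem_compl_iff, Set.mem_setOf_eq] at *
    intro hc
    exact hγ fun B₁ hB₁ => (hc B₁ hB₁).2
end
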